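/- There exists an absolute constant C > 0 such that for every δ ∈ (0,1) and every natural number n, (1/A_n^δ) · ∫_{Γ₁} u1 · | Σ_{k=0}^{n} A_{n−k}^{δ−1} · D*_k(u1,u2) | du1 du2 ≤ C/(n+1), where Γ₁ = {(u1,u2) ∈ Γ : u1 ≤ 1/(n+1)}. -/

import Mathlib

open MeasureTheory Finset

/-- The triangle `Γ = {(u₁,u₂) : 0 ≤ u₂ ≤ u₁/3, 0 ≤ u₁ ≤ 1}`. -/
def GammaT : Set (ℝ × ℝ) := {u | 0 ≤ u.2 ∧ u.2 ≤ u.1 / 3 ∧ 0 ≤ u.1 ∧ u.1 ≤ 1}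

open Finset in
/-- Cesàro numbers: `A_n^δ = (δ+1)(δ+2)⋯(δ+n)/n!`, with `A_0^δ = 1`. -/
noncomputable def cesaroA (δ : ℝ) (n : ℕ) : ℝ :=
  (∏ i ∈ Finset.range n, (δ + i + 1)) / n.factorial

/-- The transformed hexagonal Dirichlet kernel `D*_k`. -/
noncomputable def DstarK (k : ℕ) (u : ℝ × ℝ) : ℝ :=
  (Real.sin (((k : ℝ) + 1) * Real.pi * u.2) *
      Real.sin (((k : ℝ) + 1) * Real.pi * (u.1 + u.2) / 2) *
      Real.sin (((k : ℝ) + 1) * Real.pi * (u.1 - u.2) / 2) -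
    Real.sin ((k : ℝ) * Real.pi * u.2) *
      Real.sin ((k : ℝ) * Real.pi * (u.1 + u.2) / 2) *
      Real.sin ((k : ℝ) * Real.pi * (u.1 - u.2) / 2)) /
    (Real.sin (Real.pi * u.2) * Real.sin (Real.pi * (u.1 + u.2) / 2) *
      Real.sin (Real.pi * (u.1 - u.2) / 2))

/-!
Writing `P(t) = sin (t a) sin (t b) sin (t c)` with `a = π u₂`, `b = π (u₁ + u₂)/2`,
`c = π (u₁ - u₂)/2`, we have `D*_k = (P(k+1) - P(k)) / P(1)`, and on `Γ` all three angles lie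
in `[0, 2π/3]`. Telescoping the triple product and using `|sin (k x)| ≤ k |sin x|` together with
`|sin ((k+1) x) - sin (k x)| ≤ 2 sin (x/2) ≤ 2 sin x` (as `cos (x/2) ≥ 1/2`) gives
`|D*_k| ≤ 6 (k+1)²` on `Γ`. The weights `A_{n-k}^{δ-1}` are positive and sum to `A_n^δ`, so the
Cesàro kernel is at most `6 (n+1)² A_n^δ`. Finally `Γ₁` lies in the rectangle
`[0, 1/(n+1)] × [0, 1/(3(n+1))]` and `u₁ ≤ 1/(n+1)` there, which gives the bound `2/(n+1)`.
-/

open Real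

lemma abs_sin_nat_mul_le (n : ℕ) (x : ℝ) : |sin (n * x)| ≤ n * |sin x| := by
  induction n with
  | zero => simp
  | succ m ih =>
    calc |sin ((m + 1 : ℕ) * x)| = |sin (m * x) * cos x + cos (m * x) * sin x| := by
          push_cast; rw [add_mul, one_mul, sin_add]
      _ ≤ |sin (m * x)| * |cos x| + |cos (m * x)| * |sin x| := by
          rw [← abs_mul, ← abs_mul]; exact abs_add_le _ _
      _ ≤ |sin (m * x)| + |sin x| :=
          add_le_add (mul_le_of_le_one_right (abs_nonneg _) (abs_cos_le_one x))
            (mul_le_of_le_one_left (abs_nonneg _) (abs_cos_le_one _))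
      _ ≤ (m + 1 : ℕ) * |sin x| := by push_cast; linarith

lemma abs_sin_add_sub_sin_le {a : ℝ} (x : ℝ) (ha₀ : 0 ≤ a) (ha₁ : a ≤ 2 * π / 3) :
    |sin (x + a) - sin x| ≤ 2 * sin a := by
  have hs : 0 ≤ sin (a / 2) := sin_nonneg_of_nonneg_of_le_pi (by linarith) (by linarith [pi_pos])
  have hc : 1 / 2 ≤ cos (a / 2) := by
    rw [← cos_pi_div_three]
    exact cos_le_cos_of_nonneg_of_le_pi (by linarith) (by linarith [pi_pos]) (by linarith)
  have hsa : sin a = 2 * sin (a / 2) * cos (a / 2) := by rw [← sin_two_mul]; ring_nf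
  calc |sin (x + a) - sin x| = 2 * sin (a / 2) * |cos ((x + a + x) / 2)| := by
        rw [sin_sub_sin, add_sub_cancel_left, abs_mul, abs_mul, abs_two, abs_of_nonneg hs]
    _ ≤ 2 * sin (a / 2) := mul_le_of_le_one_right (by positivity) (abs_cos_le_one _)
    _ ≤ 2 * sin a := by nlinarith

lemma abs_mul_mul_sub_mul_mul_le {α : Type*} [CommRing α] [LinearOrder α] [IsStrictOrderedRing α]
    (a₀ a₁ b₀ b₁ c₀ c₁ : α) :
    |a₁ * b₁ * c₁ - a₀ * b₀ * c₀| ≤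
      |a₁ - a₀| * |b₁| * |c₁| + |a₀| * |b₁ - b₀| * |c₁| + |a₀| * |b₀| * |c₁ - c₀| :=
  calc _ = |(a₁ - a₀) * b₁ * c₁ + a₀ * (b₁ - b₀) * c₁ + a₀ * b₀ * (c₁ - c₀)| := by ring_nf
    _ ≤ _ := by simp only [← abs_mul]; exact abs_add_three _ _ _

noncomputable def sinProd (t a b c : ℝ) : ℝ := sin (t * a) * sin (t * b) * sin (t * c)

lemma DstarK_eq (k : ℕ) (u : ℝ × ℝ) :
    DstarK k u = (sinProd (k + 1) (π * u.2) (π * (u.1 + u.2) / 2) (π * (u.1 - u.2) / 2) -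
        sinProd k (π * u.2) (π * (u.1 + u.2) / 2) (π * (u.1 - u.2) / 2)) /
      sinProd 1 (π * u.2) (π * (u.1 + u.2) / 2) (π * (u.1 - u.2) / 2) := by
  simp only [DstarK, sinProd, one_mul, mul_assoc, mul_div_assoc]

lemma abs_sinProd_succ_sub_le (k : ℕ) {a b c : ℝ} (ha : a ∈ Set.Icc 0 (2 * π / 3))
    (hb : b ∈ Set.Icc 0 (2 * π / 3)) (hc : c ∈ Set.Icc 0 (2 * π / 3)) :
    |sinProd (k + 1) a b c - sinProd k a b c| ≤ 6 * ((k : ℝ) + 1) ^ 2 * sinProd 1 a b c := by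
  have sin_nonneg_of_mem {x : ℝ} (hx : x ∈ Set.Icc 0 (2 * π / 3)) : 0 ≤ sin x :=
    sin_nonneg_of_nonneg_of_le_pi hx.1 (by linarith [hx.2, pi_pos])
  have abs_sin_succ_sub {x : ℝ} (hx : x ∈ Set.Icc 0 (2 * π / 3)) :
      |sin ((k + 1) * x) - sin (k * x)| ≤ 2 * sin x := by
    simpa only [add_mul, one_mul] using abs_sin_add_sub_sin_le (k * x) hx.1 hx.2
  have abs_sin_mul {x : ℝ} (t : ℕ) (hx : x ∈ Set.Icc 0 (2 * π / 3)) :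
      |sin (t * x)| ≤ t * sin x := by
    simpa only [abs_of_nonneg (sin_nonneg_of_mem hx)] using abs_sin_nat_mul_le t x
  have abs_sin_succ_mul {x : ℝ} (hx : x ∈ Set.Icc 0 (2 * π / 3)) :
      |sin ((k + 1) * x)| ≤ (k + 1) * sin x := by
    exact_mod_cast abs_sin_mul (k + 1) hx
  have := sin_nonneg_of_mem ha
  have := sin_nonneg_of_mem hb
  have := sin_nonneg_of_mem hc
  calc |sinProd (k + 1) a b c - sinProd k a b c|
      ≤ 2 * sin a * ((k + 1) * sin b) * ((k + 1) * sin c)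
        + k * sin a * (2 * sin b) * ((k + 1) * sin c)
        + k * sin a * (k * sin b) * (2 * sin c) := by
        refine (abs_mul_mul_sub_mul_mul_le _ _ _ _ _ _).trans ?_
        gcongr
        exacts [abs_sin_succ_sub ha, abs_sin_succ_mul hb, abs_sin_succ_mul hc, abs_sin_mul k ha,
          abs_sin_succ_sub hb, abs_sin_succ_mul hc, abs_sin_mul k ha, abs_sin_mul k hb,
          abs_sin_succ_sub hc]
    _ ≤ 6 * ((k : ℝ) + 1) ^ 2 * sinProd 1 a b c := by
        simp only [sinProd, one_mul]
        have : 0 ≤ sin a * sin b * sin c := by positivity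
        nlinarith [(k.cast_nonneg : (0 : ℝ) ≤ k)]

lemma abs_DstarK_le (k : ℕ) {u : ℝ × ℝ} (hu : u ∈ GammaT) :
    |DstarK k u| ≤ 6 * ((k : ℝ) + 1) ^ 2 := by
  obtain ⟨hu₂, hu₂₁, hu₁, hu₁₁⟩ := hu
  have hπ := pi_pos
  have ha : π * u.2 ∈ Set.Icc 0 (2 * π / 3) := ⟨by positivity, by nlinarith⟩
  have hb : π * (u.1 + u.2) / 2 ∈ Set.Icc 0 (2 * π / 3) := ⟨by positivity, by nlinarith⟩
  have hc : π * (u.1 - u.2) / 2 ∈ Set.Icc 0 (2 * π / 3) := ⟨by nlinarith, by nlinarith⟩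
  have hP := abs_sinProd_succ_sub_le k ha hb hc
  have hP₁ : 0 ≤ sinProd 1 (π * u.2) (π * (u.1 + u.2) / 2) (π * (u.1 - u.2) / 2) :=
    (mul_nonneg_iff_of_pos_left (by positivity)).1 ((abs_nonneg _).trans hP)
  rw [DstarK_eq, abs_div, abs_of_nonneg hP₁]
  exact div_le_of_le_mul₀ hP₁ (by positivity) hP

lemma cesaroA_pos {δ : ℝ} (hδ : -1 < δ) (n : ℕ) : 0 < cesaroA δ n :=
  div_pos (prod_pos fun i _ => by linarith [(i.cast_nonneg : (0 : ℝ) ≤ i)])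
    (mod_cast n.factorial_pos)

lemma cesaroA_succ (δ : ℝ) (n : ℕ) :
    cesaroA δ (n + 1) = cesaroA δ n + cesaroA (δ - 1) (n + 1) := by
  have hprod : ∏ i ∈ range (n + 1), (δ - 1 + i + 1) = δ * ∏ i ∈ range n, (δ + i + 1) := by
    rw [prod_range_succ', mul_comm]
    push_cast
    ring_nf
  have hn : (n.factorial : ℝ) ≠ 0 := mod_cast n.factorial_ne_zero
  simp only [cesaroA, hprod, prod_range_succ, Nat.factorial_succ]
  push_cast
  field_simp
  ring

lemma sum_range_cesaroA_sub_one (δ : ℝ) (n : ℕ) :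
    ∑ j ∈ range (n + 1), cesaroA (δ - 1) j = cesaroA δ n := by
  induction n with
  | zero => simp [cesaroA]
  | succ m ih => rw [sum_range_succ, ih, ← cesaroA_succ]

lemma abs_sum_cesaroA_mul_DstarK_le {δ : ℝ} (hδ : 0 < δ) (n : ℕ) {u : ℝ × ℝ} (hu : u ∈ GammaT) :
    |∑ k ∈ range (n + 1), cesaroA (δ - 1) (n - k) * DstarK k u| ≤
      6 * ((n : ℝ) + 1) ^ 2 * cesaroA δ n := by
  have hA (j : ℕ) : 0 < cesaroA (δ - 1) j := cesaroA_pos (by linarith) j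
  calc |∑ k ∈ range (n + 1), cesaroA (δ - 1) (n - k) * DstarK k u|
      ≤ ∑ k ∈ range (n + 1), cesaroA (δ - 1) (n - k) * (6 * ((n : ℝ) + 1) ^ 2) := by
        refine (abs_sum_le_sum_abs _ _).trans (sum_le_sum fun k hk => ?_)
        rw [abs_mul, abs_of_pos (hA _)]
        have hkn : (k : ℝ) ≤ n := mod_cast Nat.lt_succ_iff.1 (mem_range.1 hk)
        exact mul_le_mul_of_nonneg_left ((abs_DstarK_le k hu).trans (by gcongr)) (hA _).le
    _ = 6 * ((n : ℝ) + 1) ^ 2 * cesaroA δ n := by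
        rw [← sum_mul, mul_comm, ← sum_range_cesaroA_sub_one,
          ← sum_range_reflect (fun j => cesaroA (δ - 1) j)]
        simp only [add_tsub_cancel_right]

lemma volume_GammaT_inter_le {b : ℝ} (hb : 0 ≤ b) :
    volume (GammaT ∩ {u : ℝ × ℝ | u.1 ≤ b}) ≤ ENNReal.ofReal (b * (b / 3)) := by
  have hsub : GammaT ∩ {u : ℝ × ℝ | u.1 ≤ b} ⊆ Set.Icc 0 b ×ˢ Set.Icc 0 (b / 3) :=
    fun u ⟨⟨hu₂, hu₂₁, hu₁, _⟩, (hub : u.1 ≤ b)⟩ => ⟨⟨hu₁, hub⟩, hu₂, by linarith⟩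
  calc volume (GammaT ∩ {u : ℝ × ℝ | u.1 ≤ b})
      ≤ volume (Set.Icc 0 b ×ˢ Set.Icc 0 (b / 3)) := measure_mono hsub
    _ = ENNReal.ofReal (b * (b / 3)) := by
        rw [Measure.volume_eq_prod, Measure.prod_prod, Real.volume_Icc, Real.volume_Icc,
          sub_zero, sub_zero, ENNReal.ofReal_mul hb]

theorem stmt_15 :
    ∃ C : ℝ, 0 < C ∧
      ∀ δ : ℝ, 0 < δ → δ < 1 → ∀ n : ℕ,
        (1 / cesaroA δ n) *
            ∫ u in GammaT ∩ {u : ℝ × ℝ | u.1 ≤ 1 / ((n : ℝ) + 1)},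
              u.1 * |∑ k ∈ Finset.range (n + 1), cesaroA (δ - 1) (n - k) * DstarK k u| ≤
          C / ((n : ℝ) + 1) := by
  refine ⟨2, two_pos, fun δ hδ _ n => ?_⟩
  set b : ℝ := 1 / ((n : ℝ) + 1) with hb_def
  have hb : 0 ≤ b := by positivity
  have hA : 0 < cesaroA δ n := cesaroA_pos (by linarith) n
  have hvol := volume_GammaT_inter_le hb
  have hpointwise : ∀ u ∈ GammaT ∩ {u : ℝ × ℝ | u.1 ≤ b},
      ‖u.1 * |∑ k ∈ range (n + 1), cesaroA (δ - 1) (n - k) * DstarK k u|‖ ≤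
        b * (6 * ((n : ℝ) + 1) ^ 2 * cesaroA δ n) := fun u ⟨hu, hub⟩ => by
    rw [Real.norm_eq_abs, abs_mul, abs_abs, abs_of_nonneg hu.2.2.1]
    exact mul_le_mul hub (abs_sum_cesaroA_mul_DstarK_le hδ n hu) (abs_nonneg _) hb
  have hintegral := (le_abs_self _).trans
    (norm_setIntegral_le_of_norm_le_const (hvol.trans_lt ENNReal.ofReal_lt_top) hpointwise)
  calc (1 / cesaroA δ n) * ∫ u in GammaT ∩ {u : ℝ × ℝ | u.1 ≤ b},
        u.1 * |∑ k ∈ range (n + 1), cesaroA (δ - 1) (n - k) * DstarK k u|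
      ≤ (1 / cesaroA δ n) * (b * (6 * ((n : ℝ) + 1) ^ 2 * cesaroA δ n) * (b * (b / 3))) := by
        gcongr
        exact hintegral.trans (by gcongr; exact ENNReal.toReal_le_of_le_ofReal (by positivity) hvol)
    _ = 2 / ((n : ℝ) + 1) := by
        rw [hb_def]
        field_simp
        ring
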